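/- Let R be a commutative ring and J = (f1,…,fn). Suppose h ∈ R is integral over J^{n+k-1}. For the blowup Y of the ideal (h) + J^{n+k-1} with charts Y_i = Spec R[h/f_i^{n+k-1}, f1/f_i, …, fn/f_i], the element h lies in the ideal generated by the degree-(n+k-1) monomials in f1,…,fn within each chart ring; i.e., h/f_i^{n+k-1} is integral over R_i = R[f1/f_i,…,fn/f_i] and h ∈ (f1,…,fn)^{n+k-1}·Γ(Y_i, O_{Y_i}). -/

import Mathlib

/-!
Write `v = 1 / fᵢ` and `m = n + k - 1`. Multiplying an integral dependence relation
`h ^ d + ∑ aⱼ h ^ (d - j) = 0` with `aⱼ ∈ (J ^ m) ^ j` by `v ^ (m d)` gives a monic relation for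
`u = h vᵐ` whose coefficients `aⱼ v ^ (m j)` lie in `Rᵢ`, because every element of `J ^ N` becomes
a polynomial in the `fⱼ / fᵢ` after division by `fᵢ ^ N`. In the chart ring, `h = u fᵢᵐ` with
`fᵢᵐ ∈ J ^ m`.
-/

/-- `h` is integral over the ideal `I`. -/
def IdealIntegral {R : Type*} [CommRing R] (I : Ideal R) (h : R) : Prop :=
  ∃ d : ℕ, 0 < d ∧ ∃ a : ℕ → R, (∀ j, 1 ≤ j → j ≤ d → a j ∈ I ^ j) ∧
    h ^ d + ∑ j ∈ Finset.range d, a (j + 1) * h ^ (d - (j + 1)) = 0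

open Polynomial

lemma Localization.Away.algebraMap_mul_invSelf {R : Type*} [CommRing R] (x : R) :
    algebraMap R (Localization.Away x) x * Localization.Away.invSelf x = 1 := by
  rw [Localization.Away.invSelf, ← Localization.mk_one_eq_algebraMap, Localization.mk_mul,
    mul_one, one_mul]
  exact Localization.mk_self ⟨x, Submonoid.mem_powers x⟩

section Adjoin

variable {R S ι : Type*} [CommRing R] [CommRing S] [Algebra R S] (f : ι → R) (v : S)

lemma algebraMap_mul_mem_adjoin_of_mem_span {b : R} (hb : b ∈ Ideal.span (Set.range f)) :
    algebraMap R S b * v ∈ Algebra.adjoin R (Set.range fun j => algebraMap R S (f j) * v) := by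
  set A := Algebra.adjoin R (Set.range fun j => algebraMap R S (f j) * v)
  induction hb using Submodule.span_induction with
  | mem x hx =>
    obtain ⟨j, rfl⟩ := hx
    exact Algebra.subset_adjoin ⟨j, rfl⟩
  | zero => simp [A.zero_mem]
  | add x y _ _ hx hy => simpa only [map_add, add_mul] using A.add_mem hx hy
  | smul r x _ hx =>
    rw [smul_eq_mul, map_mul, mul_assoc]
    exact A.mul_mem (A.algebraMap_mem r) hx

lemma algebraMap_mul_pow_mem_adjoin_of_mem_span_pow {m : ℕ} {g : R}
    (hg : g ∈ Ideal.span (Set.range f) ^ m) :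
    algebraMap R S g * v ^ m ∈
      Algebra.adjoin R (Set.range fun j => algebraMap R S (f j) * v) := by
  set A := Algebra.adjoin R (Set.range fun j => algebraMap R S (f j) * v)
  induction m generalizing g with
  | zero => simp [A.algebraMap_mem g]
  | succ m ih =>
    rw [pow_succ] at hg
    induction hg using Submodule.mul_induction_on' with
    | mem_mul_mem x hx y hy =>
      have hsplit : algebraMap R S (x * y) * v ^ (m + 1)
          = (algebraMap R S x * v ^ m) * (algebraMap R S y * v) := by
        rw [map_mul, pow_succ]; ring
      rw [hsplit]
      exact A.mul_mem (ih hx) (algebraMap_mul_mem_adjoin_of_mem_span f v hy)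
    | add x _ y _ hx hy => simpa only [map_add, add_mul] using A.add_mem hx hy

end Adjoin

lemma isIntegral_of_pow_add_sum_eq_zero {R L : Type*} [CommRing R] [CommRing L] [Algebra R L]
    {A : Subalgebra R L} {u : L} {d : ℕ} {c : ℕ → L} (hc : ∀ j ∈ Finset.range d, c j ∈ A)
    (hu : u ^ d + ∑ j ∈ Finset.range d, c j * u ^ (d - (j + 1)) = 0) :
    IsIntegral A u := by
  classical
  let cA : ℕ → A := fun j => if hj : c j ∈ A then ⟨c j, hj⟩ else 0
  have hcA : ∀ j ∈ Finset.range d, algebraMap A L (cA j) = c j := fun j hj => by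
    simp only [cA, dif_pos (hc j hj)]
    rfl
  refine ⟨X ^ d + ∑ j ∈ Finset.range d, C (cA j) * X ^ (d - (j + 1)), ?_, ?_⟩
  · refine monic_X_pow_add ((degree_sum_le _ _).trans_lt ?_)
    refine (Finset.sup_lt_iff (WithBot.bot_lt_coe d)).mpr fun j hj => ?_
    refine (degree_C_mul_X_pow_le _ _).trans_lt (Nat.cast_lt.mpr ?_)
    have := Finset.mem_range.mp hj
    omega
  · rw [← hu, eval₂_add, eval₂_X_pow, eval₂_finsetSum]
    congr 1
    refine Finset.sum_congr rfl fun j hj => ?_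
    rw [eval₂_mul, eval₂_C, eval₂_X_pow, hcA j hj]

lemma IdealIntegral.isIntegral_algebraMap_mul {R L : Type*} [CommRing R] [CommRing L]
    [Algebra R L] {I : Ideal R} {h : R} (hh : IdealIntegral I h) {A : Subalgebra R L} {w : L}
    (hw : ∀ j, ∀ a ∈ I ^ j, algebraMap R L a * w ^ j ∈ A) :
    IsIntegral A (algebraMap R L h * w) := by
  obtain ⟨d, -, a, ha, heq⟩ := hh
  refine isIntegral_of_pow_add_sum_eq_zero (c := fun j => algebraMap R L (a (j + 1)) * w ^ (j + 1))
    (fun j hj => hw _ _ (ha _ le_add_self (Finset.mem_range.mp hj))) ?_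
  calc _ = w ^ d * algebraMap R L
          (h ^ d + ∑ j ∈ Finset.range d, a (j + 1) * h ^ (d - (j + 1))) := by
        simp only [map_add, map_sum, map_mul, map_pow, mul_add, Finset.mul_sum]
        congr 1
        · ring
        · refine Finset.sum_congr rfl fun j hj => ?_
          have hwd : w ^ d = w ^ (j + 1) * w ^ (d - (j + 1)) := by
            rw [← pow_add, Nat.add_sub_cancel' (Finset.mem_range.mp hj)]
          rw [hwd]
          ring
    _ = 0 := by rw [heq, map_zero, mul_zero]

theorem stmt19_general {R : Type*} [CommRing R] {n : ℕ} (f : Fin n → R) (k : ℕ)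
    (h : R) (hint : IdealIntegral ((Ideal.span (Set.range f)) ^ (n + k - 1)) h)
    (i : Fin n) :
    IsIntegral
      (Algebra.adjoin R (Set.range fun j : Fin n =>
        algebraMap R (Localization.Away (f i)) (f j) * Localization.Away.invSelf (f i)))
      (algebraMap R (Localization.Away (f i)) h *
        (Localization.Away.invSelf (f i)) ^ (n + k - 1)) ∧
    ∃ hmem : algebraMap R (Localization.Away (f i)) h ∈
        Algebra.adjoin R ((Set.range fun j : Fin n =>
            algebraMap R (Localization.Away (f i)) (f j) * Localization.Away.invSelf (f i)) ∪
          {algebraMap R (Localization.Away (f i)) h *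
            (Localization.Away.invSelf (f i)) ^ (n + k - 1)}),
      (⟨algebraMap R (Localization.Away (f i)) h, hmem⟩ :
          Algebra.adjoin R ((Set.range fun j : Fin n =>
            algebraMap R (Localization.Away (f i)) (f j) * Localization.Away.invSelf (f i)) ∪
          {algebraMap R (Localization.Away (f i)) h *
            (Localization.Away.invSelf (f i)) ^ (n + k - 1)})) ∈
        Ideal.span { x : (Algebra.adjoin R ((Set.range fun j : Fin n =>
            algebraMap R (Localization.Away (f i)) (f j) * Localization.Away.invSelf (f i)) ∪
          {algebraMap R (Localization.Away (f i)) h *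
            (Localization.Away.invSelf (f i)) ^ (n + k - 1)})) |
          ∃ g ∈ (Ideal.span (Set.range f)) ^ (n + k - 1),
          (x : Localization.Away (f i)) = algebraMap R (Localization.Away (f i)) g } := by
  set φ := algebraMap R (Localization.Away (f i))
  set v := Localization.Away.invSelf (f i)
  set m := n + k - 1
  refine ⟨hint.isIntegral_algebraMap_mul fun j a ha => ?_, ?_⟩
  · rw [← pow_mul, mul_comm] at ha
    rw [← pow_mul, mul_comm m]
    exact algebraMap_mul_pow_mem_adjoin_of_mem_span_pow f v ha
  set B := Algebra.adjoin R ((Set.range fun j => φ (f j) * v) ∪ {φ h * v ^ m})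
  have hu : φ h * v ^ m ∈ B := Algebra.subset_adjoin (Set.mem_union_right _ rfl)
  have hfactor : φ h = φ h * v ^ m * φ (f i ^ m) := by
    rw [map_pow, mul_assoc, ← mul_pow, mul_comm v,
      Localization.Away.algebraMap_mul_invSelf, one_pow, mul_one]
  refine ⟨hfactor ▸ B.mul_mem hu (B.algebraMap_mem _), ?_⟩
  rw [show (⟨φ h, _⟩ : B) = (⟨φ h * v ^ m, hu⟩ : B) * algebraMap R B (f i ^ m) from
    Subtype.ext hfactor]
  exact Ideal.mul_mem_left _ _ (Ideal.subset_span
    ⟨f i ^ m, Ideal.pow_mem_pow (Ideal.subset_span (Set.mem_range_self i)) m, rfl⟩)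

/-- Suppose `h` is integral over `J ^ (n + k - 1)` where `J = (f 1, …, f n)`.  Then in the
localization `R[1/f i]`, the element `u = h / f i ^ (n + k - 1)` is integral over the
subring `R_i = R[f 1/f i, …, f n/f i]`, and in the chart ring `B i = R_i[u]` of the blowup
of `(h) + J ^ (n + k - 1)` one has `h ∈ J ^ (n + k - 1) ⬝ B i`. -/
theorem stmt19 {R : Type*} [CommRing R] {n : ℕ} (f : Fin n → R) (k : ℕ) (hk : 1 ≤ k)
    (h : R) (hint : IdealIntegral ((Ideal.span (Set.range f)) ^ (n + k - 1)) h)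
    (i : Fin n) :
    IsIntegral
      (Algebra.adjoin R (Set.range fun j : Fin n =>
        algebraMap R (Localization.Away (f i)) (f j) * Localization.Away.invSelf (f i)))
      (algebraMap R (Localization.Away (f i)) h *
        (Localization.Away.invSelf (f i)) ^ (n + k - 1)) ∧
    ∃ hmem : algebraMap R (Localization.Away (f i)) h ∈
        Algebra.adjoin R ((Set.range fun j : Fin n =>
            algebraMap R (Localization.Away (f i)) (f j) * Localization.Away.invSelf (f i)) ∪
          {algebraMap R (Localization.Away (f i)) h *
            (Localization.Away.invSelf (f i)) ^ (n + k - 1)}),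
      (⟨algebraMap R (Localization.Away (f i)) h, hmem⟩ :
          Algebra.adjoin R ((Set.range fun j : Fin n =>
            algebraMap R (Localization.Away (f i)) (f j) * Localization.Away.invSelf (f i)) ∪
          {algebraMap R (Localization.Away (f i)) h *
            (Localization.Away.invSelf (f i)) ^ (n + k - 1)})) ∈
        Ideal.span { x : (Algebra.adjoin R ((Set.range fun j : Fin n =>
            algebraMap R (Localization.Away (f i)) (f j) * Localization.Away.invSelf (f i)) ∪
          {algebraMap R (Localization.Away (f i)) h *
            (Localization.Away.invSelf (f i)) ^ (n + k - 1)})) |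
          ∃ g ∈ (Ideal.span (Set.range f)) ^ (n + k - 1),
          (x : Localization.Away (f i)) = algebraMap R (Localization.Away (f i)) g } :=
  stmt19_general f k h hint i
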